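/- Let V be an object of a semisimple k-linear rigid monoidal category C and n ≥ 1. The n-th Frobenius–Schur endomorphism FS_V^(n) : V → V is independent of the choice of right dual X of V^⊗(n−1) and of the choice of trivial component of V^⊗n. Moreover, if F : C → D is an equivalence of semisimple k-linear monoidal categories, then F(FS_V^(n)) = FS_{F(V)}^(n) as endomorphisms of F(V). -/

import Mathlib

/-!
Any two trivial components of `W` are related by the isomorphism `t₁.ι ≫ t₂.π` between their
trivial parts, and any two right duals of `V^⊗n` by the mate of the identity; naturality of `τ`
in its trivial and in its arbitrary argument absorbs these isomorphisms, so `FS_V^(n+1)` does not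
depend on the choices.

A monoidal functor `F` carries a right dual of `V^⊗n` and a trivial component of `V^⊗(n+1)` to
the same data for `F V`, after transport along the canonical isomorphism `F (V^⊗n) ≅ (F V)^⊗n`.
On a trivial object `τ` is a sum over a decomposition into copies of the unit, so `F` also
preserves `τ`. Hence `F (FS_V)` is an `FS` endomorphism of `F V`, and by the first part it equals
every other one.
-/

open CategoryTheory MonoidalCategory Functor.LaxMonoidal Functor.OplaxMonoidal

namespace FSI

variable {C : Type*} [Category C] [MonoidalCategory C] [RightRigidCategory C]
variable {D : Type*} [Category D] [MonoidalCategory D] [RightRigidCategory D]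

/-- The adjunction isomorphism `A : C(I, V ⊗ W) → C(V^∨, W)`,
`A(f) = (ev_V ⊗ W) ∘ Φ⁻¹ ∘ (V^∨ ⊗ f)`. -/
def Amap (V W : C) (f : 𝟙_ C ⟶ V ⊗ W) : Vᘁ ⟶ W :=
  (ρ_ (Vᘁ)).inv ≫ (Vᘁ ◁ f) ≫ (α_ (Vᘁ) V W).inv ≫ (ε_ V (Vᘁ) ▷ W) ≫ (λ_ W).hom

/-- The inverse of the adjunction isomorphism `A`, `A⁻¹(g) = (V ⊗ g) ∘ db_V`. -/
def Ainv (V W : C) (g : Vᘁ ⟶ W) : 𝟙_ C ⟶ V ⊗ W :=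
  η_ V (Vᘁ) ≫ (V ◁ g)

/-- `B : C(V, W) → C(I, W ⊗ V^∨)`, `B(f) = (f ⊗ V^∨) ∘ db_V`. -/
def Bmap (V W : C) (f : V ⟶ W) : 𝟙_ C ⟶ W ⊗ (Vᘁ) :=
  η_ V (Vᘁ) ≫ (f ▷ (Vᘁ))

/-- `T_{V,W} : C(V^∨, W) → C(W^∨, V)`, `T(g) = j_V⁻¹ ∘ g^∨`, defined relative to a chosen
isomorphism `j_V : V ≅ V^∨∨` (a component of a pivotal structure). -/
def Tmap {V W : C} (jV : V ≅ (Vᘁ)ᘁ) (g : Vᘁ ⟶ W) : Wᘁ ⟶ V :=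
  gᘁ ≫ jV.inv

/-- `E_{V,W} = A⁻¹ ∘ T_{V,W} ∘ A : C(I, V ⊗ W) → C(I, W ⊗ V)`. -/
def Emap {V : C} (W : C) (jV : V ≅ (Vᘁ)ᘁ) (f : 𝟙_ C ⟶ V ⊗ W) : 𝟙_ C ⟶ W ⊗ V :=
  Ainv W V (Tmap jV (Amap V W f))

/-- The `n`-fold tensor power with rightmost parenthesization:
`V^⊗0 = I`, `V^⊗(n+1) = V ⊗ V^⊗n`. -/
def pow (V : C) : ℕ → C
  | 0 => 𝟙_ C
  | n + 1 => V ⊗ pow V n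

/-- The coherence isomorphism `Φ^(n+1) : V^⊗n ⊗ V ⟶ V^⊗(n+1)` built from associators
(and unitors). -/
def PhiN (V : C) : ∀ n : ℕ, pow V n ⊗ V ⟶ pow V (n + 1)
  | 0 => (λ_ V).hom ≫ (ρ_ V).inv
  | n + 1 => (α_ V (pow V n) V).hom ≫ (V ◁ PhiN V n)

/-- `E_V^(n+1) = C(I, Φ^(n+1)) ∘ E_{V, V^⊗n} : C(I, V^⊗(n+1)) → C(I, V^⊗(n+1))`.
Here `jj` is the family of components of a pivotal structure. -/
def EN (jj : ∀ X : C, X ≅ (Xᘁ)ᘁ) (V : C) (n : ℕ)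
    (f : 𝟙_ C ⟶ pow V (n + 1)) : 𝟙_ C ⟶ pow V (n + 1) :=
  Emap (pow V n) (jj V) f ≫ PhiN V n

/-- The canonical evaluation exhibiting `Y^∨ ⊗ X^∨` as a dual of `X ⊗ Y`. -/
def tildeEv (X Y : C) : ((Yᘁ) ⊗ (Xᘁ)) ⊗ (X ⊗ Y) ⟶ 𝟙_ C :=
  (α_ (Yᘁ) (Xᘁ) (X ⊗ Y)).hom ≫
    ((Yᘁ) ◁ ((α_ (Xᘁ) X Y).inv ≫ (ε_ X (Xᘁ) ▷ Y) ≫ (λ_ Y).hom)) ≫ ε_ Y (Yᘁ)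

/-- The canonical isomorphism `ζ : Y^∨ ⊗ X^∨ ⟶ (X ⊗ Y)^∨` making the duality functor
monoidal; it is the unique morphism with `ev_{X⊗Y} ∘ (ζ ⊗ (X⊗Y)) = tildeEv`. -/
def zeta (X Y : C) : (Yᘁ) ⊗ (Xᘁ) ⟶ (X ⊗ Y)ᘁ :=
  (ρ_ ((Yᘁ) ⊗ (Xᘁ))).inv ≫ (((Yᘁ) ⊗ (Xᘁ)) ◁ η_ (X ⊗ Y) ((X ⊗ Y)ᘁ)) ≫
    (α_ ((Yᘁ) ⊗ (Xᘁ)) (X ⊗ Y) ((X ⊗ Y)ᘁ)).inv ≫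
      (tildeEv X Y ▷ ((X ⊗ Y)ᘁ)) ≫ (λ_ ((X ⊗ Y)ᘁ)).hom

/-- A pivotal structure on a rigid monoidal category: a monoidal natural isomorphism
`j : Id → (−)^∨∨`. -/
structure Pivotal (C : Type*) [Category C] [MonoidalCategory C] [RightRigidCategory C] where
  j : ∀ X : C, X ≅ (Xᘁ)ᘁ
  naturality : ∀ {X Y : C} (f : X ⟶ Y), f ≫ (j Y).hom = (j X).hom ≫ (fᘁ)ᘁ
  monoidality : ∀ X Y : C,
    ((j X).hom ⊗ₘ (j Y).hom) ≫ zeta (Yᘁ) (Xᘁ) = (j (X ⊗ Y)).hom ≫ (zeta X Y)ᘁ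

/-- The categorical trace `ctr(a) = ev_{V^∨} ∘ (a ⊗ V^∨) ∘ db_V ∈ End(I)` of a morphism
`a : V ⟶ V^∨∨`. -/
def ctr {V : C} (a : V ⟶ (Vᘁ)ᘁ) : 𝟙_ C ⟶ 𝟙_ C :=
  η_ V (Vᘁ) ≫ (a ▷ (Vᘁ)) ≫ ε_ (Vᘁ) ((Vᘁ)ᘁ)

/-- The left pivotal trace `ptr_l(f) = ev_V ∘ (V^∨ ⊗ (f ∘ j_V⁻¹)) ∘ db_{V^∨}`. -/
def ptrl (jj : ∀ X : C, X ≅ (Xᘁ)ᘁ) {V : C} (f : V ⟶ V) : 𝟙_ C ⟶ 𝟙_ C :=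
  η_ (Vᘁ) ((Vᘁ)ᘁ) ≫ ((Vᘁ) ◁ ((jj V).inv ≫ f)) ≫ ε_ V (Vᘁ)

/-- The right pivotal trace `ptr_r(f) = ev_{V^∨} ∘ ((j_V ∘ f) ⊗ V^∨) ∘ db_V`. -/
def ptrr (jj : ∀ X : C, X ≅ (Xᘁ)ᘁ) {V : C} (f : V ⟶ V) : 𝟙_ C ⟶ 𝟙_ C :=
  η_ V (Vᘁ) ≫ ((f ≫ (jj V).hom) ▷ (Vᘁ)) ≫ ε_ (Vᘁ) ((Vᘁ)ᘁ)

/-- A pivotal category is *spherical* if left and right pivotal traces agree. -/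
def Spherical (jj : ∀ X : C, X ≅ (Xᘁ)ᘁ) : Prop :=
  ∀ (V : C) (f : V ⟶ V), ptrl jj f = ptrr jj f

section SemisimpleDefs

variable (k : Type*) [Field k]

/-- An object of a `k`-linear category is *simple* if its endomorphism ring is `k`. -/
def IsSimpleObj {C : Type*} [Category C] [Preadditive C] [CategoryTheory.Linear k C]
    (X : C) : Prop :=
  𝟙 X ≠ 0 ∧ ∀ f : X ⟶ X, ∃ c : k, f = c • 𝟙 X

/-- A `k`-linear monoidal category is *semisimple* if every object is a finite direct sum
of simple objects. -/
def SemisimpleCat (C : Type*) [Category C] [Preadditive C] [CategoryTheory.Linear k C] : Prop :=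
  ∀ X : C, ∃ (n : ℕ) (s : Fin n → C) (a : ∀ i, s i ⟶ X) (b : ∀ i, X ⟶ s i),
    (∀ i, IsSimpleObj k (s i)) ∧ (∀ i, a i ≫ b i = 𝟙 (s i)) ∧
      (∀ i j, i ≠ j → a i ≫ b j = 0) ∧ (∑ i, b i ≫ a i) = 𝟙 X

/-- An object is *trivial* if it is (isomorphic to) a finite direct sum of copies of the
unit object. -/
def IsTrivial {C : Type*} [Category C] [MonoidalCategory C] [Preadditive C] (T : C) : Prop :=
  ∃ (n : ℕ) (a : Fin n → (𝟙_ C ⟶ T)) (b : Fin n → (T ⟶ 𝟙_ C)),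
    (∀ i j, a i ≫ b j = if i = j then 𝟙 (𝟙_ C) else 0) ∧ (∑ i, b i ≫ a i) = 𝟙 T

/-- A trivial (`I`-isotypical) component of an object `V`: a retract `(T, ι, π)` of `V`
with `T` trivial such that `ι ∘ π` is the idempotent of `V` projecting onto the
`I`-isotypical summand. -/
structure TrivialComponent {C : Type*} [Category C] [MonoidalCategory C] [Preadditive C]
    (V : C) where
  T : C
  ι : T ⟶ V
  π : V ⟶ T
  trivial : IsTrivial T
  retract : ι ≫ π = 𝟙 T
  fac_from : ∀ g : 𝟙_ C ⟶ V, g ≫ π ≫ ι = g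
  fac_to : ∀ p : V ⟶ 𝟙_ C, π ≫ ι ≫ p = p

/-- The canonical exchange isomorphisms `τ_{V,T} : V ⊗ T ⟶ T ⊗ V` for `T` trivial:
the unique family natural in `V` and in trivial `T` with `τ_{V,I}` the canonical
isomorphism. -/
structure TrivialExchange (C : Type*) [Category C] [MonoidalCategory C] [Preadditive C] where
  τ : ∀ V T : C, V ⊗ T ⟶ T ⊗ V
  iso : ∀ V T : C, IsTrivial T → IsIso (τ V T)
  natV : ∀ {V V' : C} (f : V ⟶ V') (T : C), IsTrivial T →
    (f ▷ T) ≫ τ V' T = τ V T ≫ (T ◁ f)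
  natT : ∀ (V : C) {T T' : C} (g : T ⟶ T'), IsTrivial T → IsTrivial T' →
    (V ◁ g) ≫ τ V T' = τ V T ≫ (g ▷ V)
  unit : ∀ V : C, τ V (𝟙_ C) = (ρ_ V).hom ≫ (λ_ V).inv

end SemisimpleDefs

section FSDefs

variable {C : Type*} [Category C] [MonoidalCategory C] [Preadditive C]

/-- The `(n+1)`-st Frobenius–Schur endomorphism `FS_V^(n+1) : V ⟶ V`, relative to a choice
of exchange isomorphisms `τ`, a right dual `X` of `V^⊗n` (an object with an exact pairing
`db : I ⟶ X ⊗ V^⊗n`, `ev : V^⊗n ⊗ X ⟶ I`), and a trivial component `t` of `V^⊗(n+1)`. -/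
def FS (τ : ∀ V T : C, V ⊗ T ⟶ T ⊗ V) (V : C) (n : ℕ)
    (X : C) [ExactPairing X (pow V n)] (t : TrivialComponent (pow V (n + 1))) : V ⟶ V :=
  (λ_ V).inv ≫ (η_ X (pow V n) ▷ V) ≫ (α_ X (pow V n) V).hom ≫ (X ◁ PhiN V n) ≫
    (X ◁ t.π) ≫ τ X t.T ≫ (t.ι ▷ X) ≫ (α_ V (pow V n) X).hom ≫
      (V ◁ ε_ X (pow V n)) ≫ (ρ_ V).hom

end FSDefs

section Exchange

variable {C : Type*} [Category C] [MonoidalCategory C] [Preadditive C]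

lemma isTrivial_unit : IsTrivial (𝟙_ C) :=
  ⟨1, fun _ => 𝟙 _, fun _ => 𝟙 _, by simp [Fin.fin_one_eq_zero], by simp⟩

lemma TrivialExchange.τ_eq_sum [MonoidalPreadditive C] (te : TrivialExchange C) (X : C) {T : C}
    (hT : IsTrivial T) {m : ℕ} (a : Fin m → (𝟙_ C ⟶ T)) (b : Fin m → (T ⟶ 𝟙_ C))
    (hba : ∑ i, b i ≫ a i = 𝟙 T) :
    te.τ X T = ∑ i, X ◁ b i ≫ (ρ_ X).hom ≫ (λ_ X).inv ≫ a i ▷ X := by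
  calc te.τ X T = te.τ X T ≫ (∑ i, b i ≫ a i) ▷ X := by
        rw [hba, id_whiskerRight, Category.comp_id]
    _ = _ := by
      simp only [sum_whiskerRight, Preadditive.comp_sum, comp_whiskerRight]
      refine Finset.sum_congr rfl fun i _ => ?_
      rw [← Category.assoc, ← te.natT X (b i) hT isTrivial_unit, te.unit, Category.assoc,
        Category.assoc]

namespace TrivialComponent

lemma ι_π_ι {W : C} (t₁ t₂ : TrivialComponent W) : t₁.ι ≫ t₂.π ≫ t₂.ι = t₁.ι := by
  obtain ⟨m, a, b, -, hba⟩ := t₁.trivial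
  have fac i : a i ≫ t₁.ι ≫ t₂.π ≫ t₂.ι = a i ≫ t₁.ι := by
    simpa using t₂.fac_from (a i ≫ t₁.ι)
  calc t₁.ι ≫ t₂.π ≫ t₂.ι = (∑ i, b i ≫ a i) ≫ t₁.ι ≫ t₂.π ≫ t₂.ι := by
        rw [hba, Category.id_comp]
    _ = (∑ i, b i ≫ a i) ≫ t₁.ι := by simp only [Preadditive.sum_comp, Category.assoc, fac]
    _ = t₁.ι := by rw [hba, Category.id_comp]

lemma π_ι_π {W : C} (t₁ t₂ : TrivialComponent W) : t₁.π ≫ t₁.ι ≫ t₂.π = t₂.π := by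
  obtain ⟨m, a, b, -, hba⟩ := t₂.trivial
  have fac i : t₁.π ≫ t₁.ι ≫ t₂.π ≫ b i ≫ a i = t₂.π ≫ b i ≫ a i := by
    simpa using t₁.fac_to (t₂.π ≫ b i) =≫ a i
  calc t₁.π ≫ t₁.ι ≫ t₂.π = (t₁.π ≫ t₁.ι ≫ t₂.π) ≫ ∑ i, b i ≫ a i := by
        rw [hba, Category.comp_id]
    _ = t₂.π ≫ ∑ i, b i ≫ a i := by simp only [Preadditive.comp_sum, Category.assoc, fac]
    _ = t₂.π := by rw [hba, Category.comp_id]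

def exchange {W : C} (τ : ∀ V T : C, V ⊗ T ⟶ T ⊗ V) (t : TrivialComponent W) (X : C) :
    X ⊗ W ⟶ W ⊗ X :=
  X ◁ t.π ≫ τ X t.T ≫ t.ι ▷ X

lemma exchange_eq (te : TrivialExchange C) {W : C} (t₁ t₂ : TrivialComponent W) (X : C) :
    t₁.exchange te.τ X = t₂.exchange te.τ X := by
  have hnat := te.natT X (t₁.ι ≫ t₂.π) t₁.trivial t₂.trivial
  calc t₁.exchange te.τ X = X ◁ t₁.π ≫ te.τ X t₁.T ≫ ((t₁.ι ≫ t₂.π) ≫ t₂.ι) ▷ X := by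
        rw [Category.assoc, ι_π_ι]; rfl
    _ = X ◁ (t₁.π ≫ t₁.ι ≫ t₂.π) ≫ te.τ X t₂.T ≫ t₂.ι ▷ X := by
        rw [comp_whiskerRight, ← reassoc_of% hnat]
        simp only [MonoidalCategory.whiskerLeft_comp, Category.assoc]
    _ = t₂.exchange te.τ X := by rw [π_ι_π]; rfl

lemma exchange_naturality (te : TrivialExchange C) {W : C} (t : TrivialComponent W)
    {X X' : C} (u : X ⟶ X') :
    u ▷ W ≫ t.exchange te.τ X' = t.exchange te.τ X ≫ W ◁ u := by
  simp only [exchange, Category.assoc]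
  rw [← whisker_exchange_assoc, reassoc_of% te.natV u t.T t.trivial, whisker_exchange]

def congr {W W' : C} (t : TrivialComponent W) (i : W ≅ W') : TrivialComponent W' where
  T := t.T
  ι := t.ι ≫ i.hom
  π := i.inv ≫ t.π
  trivial := t.trivial
  retract := by simp [t.retract]
  fac_from g := by simpa using congrArg (· ≫ i.hom) (t.fac_from (g ≫ i.inv))
  fac_to p := by simpa using i.inv ≫= t.fac_to (i.hom ≫ p)

lemma exchange_congr (τ : ∀ V T : C, V ⊗ T ⟶ T ⊗ V) {W W' : C} (t : TrivialComponent W)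
    (i : W ≅ W') (X : C) :
    (t.congr i).exchange τ X = X ◁ i.inv ≫ t.exchange τ X ≫ i.hom ▷ X := by
  simp [exchange, congr]

end TrivialComponent

end Exchange

section Decomposition

variable {C : Type*} [Category C] [MonoidalCategory C]

def coevPow (V : C) (n : ℕ) (X : C) [ExactPairing X (pow V n)] : V ⟶ X ⊗ pow V (n + 1) :=
  (λ_ V).inv ≫ η_ X (pow V n) ▷ V ≫ (α_ X (pow V n) V).hom ≫ X ◁ PhiN V n

def evPow (V : C) (n : ℕ) (X : C) [ExactPairing X (pow V n)] : pow V (n + 1) ⊗ X ⟶ V :=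
  (α_ V (pow V n) X).hom ≫ V ◁ ε_ X (pow V n) ≫ (ρ_ V).hom

lemma FS_eq_coevPow_exchange_evPow [Preadditive C] (τ : ∀ V T : C, V ⊗ T ⟶ T ⊗ V) (V : C)
    (n : ℕ) (X : C) [ExactPairing X (pow V n)] (t : TrivialComponent (pow V (n + 1))) :
    FS τ V n X t = coevPow V n X ≫ t.exchange τ X ≫ evPow V n X := by
  simp only [FS, coevPow, TrivialComponent.exchange, evPow, Category.assoc]

variable (V : C) (n : ℕ) {X₁ X₂ : C} (p₁ : ExactPairing X₁ (pow V n))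
  (p₂ : ExactPairing X₂ (pow V n))

lemma coevPow_comp_leftDualIso :
    coevPow V n X₁ ≫ (leftDualIso p₁ p₂).hom ▷ pow V (n + 1) = coevPow V n X₂ := by
  have h := @coevaluation_comp_leftAdjointMate C _ _ _ _ ⟨X₂⟩ ⟨X₁⟩ (𝟙 (pow V n))
  simp only [MonoidalCategory.whiskerLeft_id, Category.comp_id] at h
  rw [coevPow, coevPow, ← h, comp_whiskerRight]
  simp only [leftDualIso, Category.assoc, ← whisker_exchange, associator_naturality_left_assoc]

lemma whiskerLeft_leftDualIso_comp_evPow :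
    pow V (n + 1) ◁ (leftDualIso p₁ p₂).hom ≫ evPow V n X₂ = evPow V n X₁ := by
  have h := @leftAdjointMate_comp_evaluation C _ _ _ _ ⟨X₂⟩ ⟨X₁⟩ (𝟙 (pow V n))
  simp only [id_whiskerRight, Category.id_comp] at h
  have := associator_naturality_right_assoc V (pow V n) (leftDualIso p₁ p₂).hom
    (V ◁ ε_ X₂ (pow V n) ≫ (ρ_ V).hom)
  rwa [← MonoidalCategory.whiskerLeft_comp_assoc, leftDualIso, h] at this

end Decomposition

lemma FS_eq_FS {C : Type*} [Category C] [MonoidalCategory C] [Preadditive C]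
    (te : TrivialExchange C) (V : C) (n : ℕ) (X₁ X₂ : C) [p₁ : ExactPairing X₁ (pow V n)]
    [p₂ : ExactPairing X₂ (pow V n)] (t₁ t₂ : TrivialComponent (pow V (n + 1))) :
    FS te.τ V n X₁ t₁ = FS te.τ V n X₂ t₂ := by
  rw [FS_eq_coevPow_exchange_evPow, FS_eq_coevPow_exchange_evPow,
    ← coevPow_comp_leftDualIso V n p₁ p₂, ← whiskerLeft_leftDualIso_comp_evPow V n p₁ p₂,
    t₁.exchange_eq te t₂, Category.assoc, reassoc_of% t₂.exchange_naturality te]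

section Transport

variable {C : Type*} [Category C] [MonoidalCategory C]
variable {D : Type*} [Category D] [MonoidalCategory D]
variable (F : C ⥤ D) [F.Monoidal]

open Functor.Monoidal

abbrev ExactPairing.map (X Y : C) [ExactPairing X Y] : ExactPairing (F.obj X) (F.obj Y) where
  coevaluation' := ε F ≫ F.map (η_ X Y) ≫ δ F X Y
  evaluation' := μ F Y X ≫ F.map (ε_ X Y) ≫ η F
  coevaluation_evaluation' := by
    have h := F.congr_map (ExactPairing.coevaluation_evaluation X Y)
    simp only [F.map_comp, map_whiskerLeft, map_associator_inv, map_whiskerRight,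
      map_rightUnitor, map_leftUnitor_inv, Category.assoc, μ_δ_assoc] at h
    have := (F.obj Y ◁ ε F ≫ μ F _ _) ≫= (h =≫ (δ F _ _ ≫ η F ▷ F.obj Y))
    simp only [Category.assoc, μ_δ_assoc, whiskerLeft_ε_η_assoc, whiskerRight_ε_η,
      Category.comp_id] at this
    simpa only [MonoidalCategory.whiskerLeft_comp, comp_whiskerRight, Category.assoc]
  evaluation_coevaluation' := by
    have h := F.congr_map (ExactPairing.evaluation_coevaluation X Y)
    simp only [F.map_comp, map_whiskerLeft, map_associator, map_whiskerRight,
      map_leftUnitor, map_rightUnitor_inv, Category.assoc, μ_δ_assoc] at h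
    have := (ε F ▷ F.obj X ≫ μ F _ _) ≫= (h =≫ (δ F _ _ ≫ F.obj X ◁ η F))
    simp only [Category.assoc, μ_δ_assoc, whiskerRight_ε_η_assoc, whiskerLeft_ε_η,
      Category.comp_id] at this
    simpa only [MonoidalCategory.whiskerLeft_comp, comp_whiskerRight, Category.assoc]

def powIso (V : C) : ∀ n : ℕ, F.obj (pow V n) ≅ pow (F.obj V) n
  | 0 => (εIso F).symm
  | n + 1 => (μIso F V (pow V n)).symm ≪≫ whiskerLeftIso (F.obj V) (powIso V n)

@[simp] lemma powIso_zero_hom (V : C) : (powIso F V 0).hom = η F := rfl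

@[simp] lemma powIso_zero_inv (V : C) : (powIso F V 0).inv = ε F := rfl

@[simp] lemma powIso_succ_hom (V : C) (n : ℕ) :
    (powIso F V (n + 1)).hom = (δ F V (pow V n) ≫ F.obj V ◁ (powIso F V n).hom :
      F.obj (pow V (n + 1)) ⟶ pow (F.obj V) (n + 1)) := rfl

@[simp] lemma powIso_succ_inv (V : C) (n : ℕ) :
    (powIso F V (n + 1)).inv = (F.obj V ◁ (powIso F V n).inv ≫ μ F V (pow V n) :
      pow (F.obj V) (n + 1) ⟶ F.obj (pow V (n + 1))) := rfl

lemma map_PhiN (V : C) (n : ℕ) :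
    μ F (pow V n) V ≫ F.map (PhiN V n) =
      (powIso F V n).hom ▷ F.obj V ≫ PhiN (F.obj V) n ≫ (powIso F V (n + 1)).inv := by
  induction n with
  | zero =>
    simp only [powIso_zero_hom, powIso_succ_inv, powIso_zero_inv]
    dsimp only [PhiN, pow]
    simp only [F.map_comp, map_leftUnitor, map_rightUnitor_inv, μ_δ_assoc, Category.assoc]
  | succ n ih =>
    -- `pow V (n + 1)` and `V ⊗ pow V n` agree only up to unfolding, so the objects are spelled
    -- out to let the rewriting lemmas match syntactically.
    show μ F (V ⊗ pow V n) V ≫ F.map ((α_ V (pow V n) V).hom ≫ V ◁ PhiN V n) =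
      (δ F V (pow V n) ≫ F.obj V ◁ (powIso F V n).hom) ▷ F.obj V ≫
        ((α_ _ _ _).hom ≫ F.obj V ◁ PhiN (F.obj V) n) ≫
        F.obj V ◁ (powIso F V (n + 1)).inv ≫ μ F V (pow V (n + 1))
    simp only [F.map_comp, map_associator, map_whiskerLeft, μ_δ_assoc, Category.assoc,
      ← MonoidalCategory.whiskerLeft_comp_assoc, ih]
    simp only [MonoidalCategory.whiskerLeft_comp, comp_whiskerRight, Category.assoc,
      associator_naturality_middle_assoc]

abbrev ExactPairing.mapPow (V : C) (n : ℕ) (X : C) [ExactPairing X (pow V n)] :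
    ExactPairing (F.obj X) (pow (F.obj V) n) :=
  letI := ExactPairing.map F X (pow V n)
  exactPairingCongrRight (powIso F V n).symm

variable (V : C) (n : ℕ) (X : C) [ExactPairing X (pow V n)]

lemma coevaluation_mapPow :
    @ExactPairing.coevaluation _ _ _ (F.obj X) (pow (F.obj V) n) (ExactPairing.mapPow F V n X) =
      (ε F ≫ F.map (η_ X (pow V n)) ≫ δ F X (pow V n)) ≫ F.obj X ◁ (powIso F V n).hom :=
  rfl

lemma evaluation_mapPow :
    @ExactPairing.evaluation _ _ _ (F.obj X) (pow (F.obj V) n) (ExactPairing.mapPow F V n X) =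
      (powIso F V n).inv ▷ F.obj X ≫ μ F (pow V n) X ≫ F.map (ε_ X (pow V n)) ≫ η F :=
  rfl

lemma map_coevPow :
    F.map (coevPow V n X) =
      @coevPow D _ _ (F.obj V) n (F.obj X) (ExactPairing.mapPow F V n X) ≫
        F.obj X ◁ (powIso F V (n + 1)).inv ≫ μ F X (pow V (n + 1)) := by
  simp only [coevPow, coevaluation_mapPow, F.map_comp, map_leftUnitor_inv, map_whiskerRight,
    map_associator, map_whiskerLeft, μ_δ_assoc, Category.assoc,
    ← MonoidalCategory.whiskerLeft_comp_assoc, map_PhiN]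
  simp only [MonoidalCategory.whiskerLeft_comp, comp_whiskerRight, Category.assoc,
    associator_naturality_middle_assoc]

lemma map_evPow :
    F.map (evPow V n X) =
      δ F (pow V (n + 1)) X ≫ (powIso F V (n + 1)).hom ▷ F.obj X ≫
        @evPow D _ _ (F.obj V) n (F.obj X) (ExactPairing.mapPow F V n X) := by
  have h : F.map (((α_ V (pow V n) X).hom ≫ V ◁ ε_ X (pow V n) ≫ (ρ_ V).hom :
      (V ⊗ pow V n) ⊗ X ⟶ V)) = δ F (V ⊗ pow V n) X ≫
        (δ F V (pow V n) ≫ F.obj V ◁ (powIso F V n).hom) ▷ F.obj X ≫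
        (α_ _ _ _).hom ≫ F.obj V ◁ ((powIso F V n).inv ▷ F.obj X ≫ μ F (pow V n) X ≫
          F.map (ε_ X (pow V n)) ≫ η F) ≫ (ρ_ (F.obj V)).hom := by
    simp only [F.map_comp, map_associator, map_whiskerLeft, map_rightUnitor, μ_δ_assoc,
      Category.assoc, comp_whiskerRight, associator_naturality_middle_assoc,
      ← MonoidalCategory.whiskerLeft_comp_assoc, ← comp_whiskerRight_assoc, Iso.hom_inv_id,
      id_whiskerRight, Category.id_comp]
  exact h

variable [Preadditive C] [Preadditive D] [F.Additive]

lemma IsTrivial.map {T : C} (h : IsTrivial T) : IsTrivial (F.obj T) := by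
  obtain ⟨m, a, b, hab, hba⟩ := h
  refine ⟨m, fun i => ε F ≫ F.map (a i), fun i => F.map (b i) ≫ η F, fun i j => ?_, ?_⟩
  · rw [Category.assoc, ← F.map_comp_assoc, hab i j]
    split_ifs <;> simp
  · simp only [Category.assoc, η_ε_assoc, ← F.map_comp, ← F.map_sum, hba, F.map_id]

lemma map_τ [MonoidalPreadditive C] [MonoidalPreadditive D] (tC : TrivialExchange C)
    (tD : TrivialExchange D) (X : C) {T : C} (hT : IsTrivial T) :
    F.map (tC.τ X T) = δ F X T ≫ tD.τ (F.obj X) (F.obj T) ≫ μ F T X := by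
  obtain ⟨m, a, b, hab, hba⟩ := hT
  have hba' : ∑ i, (F.map (b i) ≫ η F) ≫ ε F ≫ F.map (a i) = 𝟙 (F.obj T) := by
    simp only [Category.assoc, η_ε_assoc, ← F.map_comp, ← F.map_sum, hba, F.map_id]
  rw [tC.τ_eq_sum X ⟨m, a, b, hab, hba⟩ a b hba,
    tD.τ_eq_sum (F.obj X) (IsTrivial.map F ⟨m, a, b, hab, hba⟩) _ _ hba']
  simp only [F.map_sum, Preadditive.sum_comp, Preadditive.comp_sum, F.map_comp,
    map_whiskerLeft, map_whiskerRight, map_rightUnitor, map_leftUnitor_inv,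
    MonoidalCategory.whiskerLeft_comp, comp_whiskerRight, Category.assoc, μ_δ_assoc]

variable [F.Full]

def TrivialComponent.map {W : C} (t : TrivialComponent W) : TrivialComponent (F.obj W) where
  T := F.obj t.T
  ι := F.map t.ι
  π := F.map t.π
  trivial := t.trivial.map F
  retract := by rw [← F.map_comp, t.retract, F.map_id]
  fac_from g := by
    obtain ⟨g₀, hg₀⟩ := F.map_surjective (η F ≫ g)
    have hg : g = ε F ≫ F.map g₀ := by rw [hg₀, ε_η_assoc]
    rw [hg, Category.assoc, ← F.map_comp, ← F.map_comp, t.fac_from]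
  fac_to p := by
    obtain ⟨p₀, hp₀⟩ := F.map_surjective (p ≫ ε F)
    have hp : p = F.map p₀ ≫ η F := by rw [hp₀, Category.assoc, ε_η, Category.comp_id]
    rw [hp, ← F.map_comp_assoc, ← F.map_comp_assoc, Category.assoc, t.fac_to]

variable [MonoidalPreadditive C] [MonoidalPreadditive D] (tC : TrivialExchange C)
  (tD : TrivialExchange D)

lemma TrivialComponent.map_exchange {W : C} (t : TrivialComponent W) :
    F.map (t.exchange tC.τ X) = δ F X W ≫ (t.map F).exchange tD.τ (F.obj X) ≫ μ F W X := by
  simp only [exchange, map, F.map_comp, map_whiskerLeft, map_whiskerRight,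
    map_τ F tC tD X t.trivial, Category.assoc, μ_δ_assoc]

lemma map_FS (t : TrivialComponent (pow V (n + 1))) :
    F.map (FS tC.τ V n X t) =
      @FS D _ _ _ tD.τ (F.obj V) n (F.obj X) (ExactPairing.mapPow F V n X)
        ((t.map F).congr (powIso F V (n + 1))) := by
  rw [FS_eq_coevPow_exchange_evPow, FS_eq_coevPow_exchange_evPow, F.map_comp, F.map_comp,
    map_coevPow, t.map_exchange F X tC tD, map_evPow, TrivialComponent.exchange_congr]
  simp only [Category.assoc, μ_δ_assoc]

end Transport

/-- The Frobenius–Schur endomorphism `FS_V^(n)` is independent of the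
choice of right dual of `V^⊗(n−1)` and of trivial component of `V^⊗n`, and is preserved by
equivalences of semisimple `k`-linear monoidal categories. (Stated for `FS^(n+1)`,
`n ≥ 0`.) -/
theorem statement16 (k : Type*) [Field k]
    [Abelian C] [CategoryTheory.Linear k C] [MonoidalPreadditive C] [MonoidalLinear k C]
    [∀ X Y : C, FiniteDimensional k (X ⟶ Y)]
    [Abelian D] [CategoryTheory.Linear k D] [MonoidalPreadditive D] [MonoidalLinear k D]
    [∀ X Y : D, FiniteDimensional k (X ⟶ Y)]
    (hC : SemisimpleCat k C) (hD : SemisimpleCat k D)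
    (hIC : IsSimpleObj k (𝟙_ C)) (hID : IsSimpleObj k (𝟙_ D))
    (tC : TrivialExchange C) (tD : TrivialExchange D)
    (V : C) (n : ℕ)
    (X₁ X₂ : C) [ExactPairing X₁ (pow V n)] [ExactPairing X₂ (pow V n)]
    (t₁ t₂ : TrivialComponent (pow V (n + 1))) :
    FS tC.τ V n X₁ t₁ = FS tC.τ V n X₂ t₂ ∧
    (∀ (F : C ⥤ D) [F.Monoidal] [F.Additive] [F.Linear k] [F.IsEquivalence]
      (Y : D) [ExactPairing Y (pow (F.obj V) n)]
      (s : TrivialComponent (pow (F.obj V) (n + 1))),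
      F.map (FS tC.τ V n X₁ t₁) = FS tD.τ (F.obj V) n Y s) := by
  refine ⟨FS_eq_FS tC V n X₁ X₂ t₁ t₂, fun F _ _ _ _ Y _ s => ?_⟩
  rw [map_FS F V n X₁ tC tD t₁]
  exact FS_eq_FS (p₁ := ExactPairing.mapPow F V n X₁) tD (F.obj V) n (F.obj X₁) Y _ s

end FSI
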